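/- arXiv:1509.05757 — 5 statements merged into one kernel-verified Lean document; each statement's English description precedes it below -/
import Mathlib

section
/- In the Moran process with exponential fitness, if R ≥ S and T ≥ P with at least one inequality strict, then for every i with 1 ≤ i ≤ N-1, the derivative with respect to r of the ratio p_{i,i+1}/p_{i,i-1} is strictly positive (assortment favours cooperation in the strong sense). -/
/-!
The exponent `w (π_i^C - π_i^D)` is affine in `r`, with slope `w` times
`(R - P) - (π̄^C - π̄^D)`, where `π̄` are the payoffs without assortment. That slope is
`((N - i)(R - S) + i(T - P)) / N`, positive for `0 < i < N`, and `exp` of an increasing affine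
function has positive derivative.
-/

lemma hasDerivAt_mul_add_one_sub_mul (x y r : ℝ) :
    HasDerivAt (fun r : ℝ => r * x + (1 - r) * y) (x - y) r := by
  have hf : (fun r : ℝ => r * x + (1 - r) * y) = fun r => y + r * (x - y) := by
    ext r
    ring
  rw [hf]
  simpa using ((hasDerivAt_id' r).mul_const (x - y)).const_add y

lemma assortment_gain_pos {N i R S T P : ℝ} (hi : 0 < i) (hiN : i < N)
    (hRS : R ≥ S) (hTP : T ≥ P) (hstrict : R > S ∨ T > P) :
    0 < (R - (i * R + (N - i) * S) / N) - (P - (i * T + (N - i) * P) / N) := by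
  have hN : N ≠ 0 := by linarith
  have hgain : (R - (i * R + (N - i) * S) / N) - (P - (i * T + (N - i) * P) / N)
      = ((N - i) * (R - S) + i * (T - P)) / N := by
    field_simp
    ring
  rw [hgain]
  refine div_pos ?_ (by linarith)
  rcases hstrict with hRS_lt | hTP_lt
  · nlinarith
  · nlinarith

theorem assortment_strong_sense_general (N : ℕ) (R S T P w : ℝ)
    (hw : 0 < w)
    (hRS : R ≥ S) (hTP : T ≥ P) (hstrict : R > S ∨ T > P) :
    ∀ i : ℕ, 1 ≤ i → i ≤ N - 1 → ∀ r ∈ Set.Icc (0 : ℝ) 1,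
      0 < deriv (fun r : ℝ => Real.exp (w *
        ((r * R + (1 - r) * ((i * R + ((N : ℝ) - i) * S) / N))
       - (r * P + (1 - r) * ((i * T + ((N : ℝ) - i) * P) / N))))) r := by
  intro i hi hiN r _
  have hderiv := (((hasDerivAt_mul_add_one_sub_mul R ((i * R + ((N : ℝ) - i) * S) / N) r).sub
    (hasDerivAt_mul_add_one_sub_mul P ((i * T + ((N : ℝ) - i) * P) / N) r)).const_mul w).exp
  simp only [Pi.sub_apply] at hderiv
  rw [hderiv.deriv]
  have hi' : (0 : ℝ) < i := by exact_mod_cast hi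
  have hiN' : (i : ℝ) < N := by exact_mod_cast (by omega : i < N)
  exact mul_pos (Real.exp_pos _) (mul_pos hw (assortment_gain_pos hi' hiN' hRS hTP hstrict))

/-- Proposition 1: assortment favours cooperation in the strong sense. -/
theorem assortment_strong_sense (N : ℕ) (R S T P w : ℝ)
    (hN : 2 ≤ N) (hw : 0 < w)
    (hRS : R ≥ S) (hTP : T ≥ P) (hstrict : R > S ∨ T > P) :
    ∀ i : ℕ, 1 ≤ i → i ≤ N - 1 → ∀ r ∈ Set.Icc (0 : ℝ) 1,
      0 < deriv (fun r : ℝ => Real.exp (w *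
        ((r * R + (1 - r) * ((i * R + ((N : ℝ) - i) * S) / N))
       - (r * P + (1 - r) * ((i * T + ((N : ℝ) - i) * P) / N))))) r :=
  assortment_strong_sense_general N R S T P w hw hRS hTP hstrict
end

section
/- In the Moran process with exponential fitness under the Grafen assortment model, the ratio of fixation probabilities equals ρ^C/ρ^D = exp(w·((N-1)/2)·[(R - P + S - T) + r(R - P - S + T)]). -/
/-!
Each fitness ratio is `exp (w * (π_i^C - π_i^D))`, and the payoff difference is affine in `i`:
the assortative terms do not depend on `i`, and the well-mixed terms are linear in `i / N`.
The product is therefore the exponential of `w` times an arithmetic series, summed by Gauss.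
-/

open Finset Real

theorem two_mul_sum_Icc_one_affine {A : Type*} [CommSemiring A] (n : ℕ) (a b : A) :
    2 * ∑ i ∈ Icc 1 n, (a + b * i) = n * (2 * a + b * (n + 1)) := by
  induction n with
  | zero => simp
  | succ k ih =>
    rw [sum_Icc_succ_top (by omega), mul_add, ih]
    push_cast
    ring

theorem grafen_payoff_sub_eq_affine (N i R S T P r : ℝ) (hN : N ≠ 0) :
    (r * R + (1 - r) * ((i * R + (N - i) * S) / N))
      - (r * P + (1 - r) * ((i * T + (N - i) * P) / N))
      = (r * (R - P) + (1 - r) * (S - P)) + (1 - r) * ((R - T) - (S - P)) / N * i := by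
  field_simp
  ring

theorem fixation_ratio_closed_form_general (N : ℕ) (R S T P w r : ℝ)
    (hN : 2 ≤ N) :
    ∏ i ∈ Finset.Icc 1 (N - 1),
        Real.exp (w * (r * R + (1 - r) * ((i * R + ((N : ℝ) - i) * S) / N)))
      / Real.exp (w * (r * P + (1 - r) * ((i * T + ((N : ℝ) - i) * P) / N)))
      = Real.exp (w * (((N : ℝ) - 1) / 2) * ((R - P + S - T) + r * (R - P - S + T))) := by
  have hN0 : (N : ℝ) ≠ 0 := by positivity
  set c := r * (R - P) + (1 - r) * (S - P)
  set d := (1 - r) * ((R - T) - (S - P)) / N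
  have hsum := two_mul_sum_Icc_one_affine (N - 1) c d
  rw [Nat.cast_sub (by omega), Nat.cast_one, sub_add_cancel] at hsum
  calc _ = ∏ i ∈ Icc 1 (N - 1), exp (w * (c + d * i)) :=
        prod_congr rfl fun i _ => by
          rw [← exp_sub, ← mul_sub, grafen_payoff_sub_eq_affine _ _ _ _ _ _ _ hN0]
    _ = exp (w * ∑ i ∈ Icc 1 (N - 1), (c + d * i)) := by rw [← exp_sum, mul_sum]
    _ = _ := by
      congr 1
      simp only [c, d] at hsum ⊢
      field_simp at hsum ⊢
      linear_combination w * hsum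

/-- Closed form for the ratio of fixation probabilities in the Grafen model. -/
theorem fixation_ratio_closed_form (N : ℕ) (R S T P w r : ℝ)
    (hN : 2 ≤ N) (hw : 0 < w) (hr : r ∈ Set.Icc (0 : ℝ) 1) :
    ∏ i ∈ Finset.Icc 1 (N - 1),
        Real.exp (w * (r * R + (1 - r) * ((i * R + ((N : ℝ) - i) * S) / N)))
      / Real.exp (w * (r * P + (1 - r) * ((i * T + ((N : ℝ) - i) * P) / N)))
      = Real.exp (w * (((N : ℝ) - 1) / 2) * ((R - P + S - T) + r * (R - P - S + T))) :=
  fixation_ratio_closed_form_general N R S T P w r hN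
end

section
/- In the Moran process with exponential fitness under the Grafen assortment model, the derivative with respect to r of the ratio of fixation probabilities ρ^C/ρ^D is strictly positive if and only if R - P - S + T > 0, i.e., R - S > P - T (Proposition 3: assortment favours cooperation in the weak sense iff R - S > P - T). -/
/-- Proposition 3: assortment favours cooperation in the weak sense iff R - S > P - T. -/
theorem assortment_weak_sense_iff (N : ℕ) (R S T P w : ℝ)
    (hN : 2 ≤ N) (hw : 0 < w) :
    ∀ r ∈ Set.Icc (0 : ℝ) 1,
      (0 < deriv (fun r : ℝ =>
          Real.exp (w * (((N : ℝ) - 1) / 2) * ((R - P + S - T) + r * (R - P - S + T)))) r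
        ↔ 0 < R - P - S + T) := by
  intro r hr
  set a : ℝ := w * (((N : ℝ) - 1) / 2) with ha
  set b : ℝ := R - P + S - T
  set d : ℝ := R - P - S + T
  have hinner : HasDerivAt (fun r : ℝ => a * (b + r * d)) (a * d) r := by
    have : HasDerivAt (fun r : ℝ => b + r * d) d r := by
      simpa using ((hasDerivAt_id r).mul_const d).const_add b
    simpa using this.const_mul a
  have hD : HasDerivAt (fun r : ℝ => Real.exp (a * (b + r * d)))
      (Real.exp (a * (b + r * d)) * (a * d)) r := hinner.exp
  rw [hD.deriv]
  have hexp : 0 < Real.exp (a * (b + r * d)) := Real.exp_pos _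
  have haPos : 0 < a := by
    have : (2 : ℝ) ≤ (N : ℝ) := by exact_mod_cast hN
    have : 0 < ((N : ℝ) - 1) / 2 := by linarith
    exact mul_pos hw this
  constructor
  · intro h
    by_contra hd
    push_neg at hd
    have : Real.exp (a * (b + r * d)) * (a * d) ≤ 0 :=
      mul_nonpos_of_nonneg_of_nonpos hexp.le (mul_nonpos_of_nonneg_of_nonpos haPos.le hd)
    linarith
  · intro h
    exact mul_pos hexp (mul_pos haPos h)
end

section
/- If R ≤ S and T ≤ P, then for all i with 1 ≤ i ≤ N-1, the derivative with respect to r of exp(w(π_i^C - π_i^D)) is less than or equal to zero (assortment does not favour cooperation in the strong sense). -/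
/-- If R ≤ S and T ≤ P, assortment does not favour cooperation in the strong sense. -/
theorem no_strong_favouring (N : ℕ) (R S T P w : ℝ)
    (hN : 2 ≤ N) (hw : 0 < w) (hRS : R ≤ S) (hTP : T ≤ P) :
    ∀ i : ℕ, 1 ≤ i → i ≤ N - 1 → ∀ r ∈ Set.Icc (0 : ℝ) 1,
      deriv (fun r : ℝ => Real.exp (w *
        ((r * R + (1 - r) * ((i * R + ((N : ℝ) - i) * S) / N))
       - (r * P + (1 - r) * ((i * T + ((N : ℝ) - i) * P) / N))))) r ≤ 0 := by
  intro i hi1 hi2 r hr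
  set B1 : ℝ := ((i : ℝ) * R + ((N : ℝ) - i) * S) / N with hB1
  set B2 : ℝ := ((i : ℝ) * T + ((N : ℝ) - i) * P) / N with hB2
  have hlin : HasDerivAt
      (fun r : ℝ => w * ((r * R + (1 - r) * B1) - (r * P + (1 - r) * B2)))
      (w * ((1 * R + (0 - 1) * B1) - (1 * P + (0 - 1) * B2))) r := by
    have h1 : HasDerivAt (fun r : ℝ => r * R + (1 - r) * B1)
        (1 * R + (0 - 1) * B1) r :=
      ((hasDerivAt_id r).mul_const R).add
        (((hasDerivAt_const r (1:ℝ)).sub (hasDerivAt_id r)).mul_const B1)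
    have h2 : HasDerivAt (fun r : ℝ => r * P + (1 - r) * B2)
        (1 * P + (0 - 1) * B2) r :=
      ((hasDerivAt_id r).mul_const P).add
        (((hasDerivAt_const r (1:ℝ)).sub (hasDerivAt_id r)).mul_const B2)
    exact (h1.sub h2).const_mul w
  have hexp := hlin.exp
  rw [hexp.deriv]
  have hNpos : (0 : ℝ) < (N : ℝ) := by
    exact_mod_cast Nat.lt_of_lt_of_le (by norm_num) hN
  have hiN : (i : ℝ) ≤ (N : ℝ) - 1 := by
    have : (i : ℝ) ≤ ((N - 1 : ℕ) : ℝ) := by exact_mod_cast hi2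
    rw [Nat.cast_sub (by omega)] at this; push_cast at this; linarith
  have hi0 : (0 : ℝ) ≤ (i : ℝ) := by positivity
  have hslope : (1 * R + (0 - 1) * B1) - (1 * P + (0 - 1) * B2) ≤ 0 := by
    have key : (i : ℝ) * R + ((N : ℝ) - i) * S - ((i : ℝ) * T + ((N : ℝ) - i) * P)
        ≥ (N : ℝ) * (R - P) := by nlinarith [mul_nonneg hi0 (sub_nonneg.mpr hTP)]
    have hdiv : R - P ≤ B1 - B2 := by
      rw [hB1, hB2, div_sub_div_same]
      rw [le_div_iff₀ hNpos]
      nlinarith [key]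
    nlinarith [hdiv]
  have he : (0 : ℝ) < Real.exp (w * ((r * R + (1 - r) * B1) - (r * P + (1 - r) * B2))) :=
    Real.exp_pos _
  have : w * ((1 * R + (0 - 1) * B1) - (1 * P + (0 - 1) * B2)) ≤ 0 :=
    mul_nonpos_of_nonneg_of_nonpos hw.le hslope
  exact mul_nonpos_of_nonneg_of_nonpos he.le this
end

section
/- For the game R = 10, S = 1, T = 8, P = 9 and any population size N > 10, assortment favours cooperation in the weak sense (since R - P - S + T = 8 > 0) but not in the strong sense: there exists i with 1 ≤ i ≤ N-1 such that (1 - i/N)(R-S) + (i/N)(T-P) ≤ 0. -/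
lemma strong_favouring_term_at_pred_nonpos {R S T P : ℝ} {N : ℕ} (hN : 1 ≤ N)
    (h : R - S ≤ ((N : ℝ) - 1) * (P - T)) :
    (1 - ((N - 1 : ℕ) : ℝ) / N) * (R - S) + (((N - 1 : ℕ) : ℝ) / N) * (T - P) ≤ 0 := by
  have hN0 : (0 : ℝ) < N := by exact_mod_cast hN
  rw [Nat.cast_sub hN, Nat.cast_one]
  have key : (1 - ((N : ℝ) - 1) / N) * (R - S) + (((N : ℝ) - 1) / N) * (T - P)
      = ((R - S) - ((N : ℝ) - 1) * (P - T)) / N := by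
    field_simp
    ring
  rw [key]
  exact div_nonpos_of_nonpos_of_nonneg (by linarith) hN0.le

/-- Example game (R,S,T,P) = (10,1,8,9): weak favouring holds but strong favouring fails
for N > 10. -/
theorem weak_but_not_strong_example (N : ℕ) (hN : 10 < N) :
    ((10 : ℝ) - 9 - 1 + 8 > 0)
    ∧ ∃ i : ℕ, 1 ≤ i ∧ i ≤ N - 1 ∧
        (1 - (i : ℝ) / N) * ((10 : ℝ) - 1) + ((i : ℝ) / N) * ((8 : ℝ) - 9) ≤ 0 := by
  refine ⟨by norm_num, N - 1, by omega, le_rfl, strong_favouring_term_at_pred_nonpos (by omega) ?_⟩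
  have h10 : (10 : ℝ) ≤ N := by exact_mod_cast hN.le
  linarith
end
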